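/- arXiv:2402.17596 — 5 statements merged into one kernel-verified Lean document; each statement's English description precedes it below -/
import Mathlib

section
/- Let a ∈ ℝ, Δt > 0, p > 0 and L ≥ 0. Let φ : ℝ → ℝ be differentiable on [a, a+Δt] and define ψ(t) = φ'(t) + p·φ(t). Assume ψ is Lipschitz on [a, a+Δt] with constant L, i.e. |ψ(t₂) − ψ(t₁)| ≤ L·|t₂ − t₁| for all t₁, t₂ ∈ [a, a+Δt]. If φ(a) ≥ 0 and ψ(a) ≥ L·Δt, then φ(t) ≥ 0 for all t ∈ [a, a+Δt]. -/
/-- scalar core of the sampled-data CBF lemma, relative degree one,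
linear class-K function α(s) = p·s. -/
theorem sampled_data_cbf_degree_one
    (a Δt p L : ℝ) (hΔt : 0 < Δt) (hp : 0 < p) (hL : 0 ≤ L)
    (φ ψ : ℝ → ℝ)
    (hφ : ∀ t ∈ Set.Icc a (a + Δt), DifferentiableAt ℝ φ t)
    (hψ : ∀ t, ψ t = deriv φ t + p * φ t)
    (hlip : ∀ t₁ ∈ Set.Icc a (a + Δt), ∀ t₂ ∈ Set.Icc a (a + Δt),
      |ψ t₂ - ψ t₁| ≤ L * |t₂ - t₁|)
    (h0 : 0 ≤ φ a) (hcond : L * Δt ≤ ψ a) :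
    ∀ t ∈ Set.Icc a (a + Δt), 0 ≤ φ t := by
  have ha : a ∈ Set.Icc a (a + Δt) := ⟨le_refl a, by linarith⟩
  -- ψ is nonnegative on the interval
  have hψpos : ∀ t ∈ Set.Icc a (a + Δt), 0 ≤ ψ t := by
    intro t ht
    have h1 := hlip a ha t ht
    have habs : |t - a| ≤ Δt := by
      rw [abs_le]; constructor <;> [linarith [ht.1]; linarith [ht.2]]
    have h2 : |ψ t - ψ a| ≤ L * Δt :=
      h1.trans (mul_le_mul_of_nonneg_left habs hL)
    have := abs_le.mp h2
    linarith [this.1]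
  -- consider g t = φ t * exp (p t)
  set g : ℝ → ℝ := fun t => φ t * Real.exp (p * t) with hg
  have hgderiv : ∀ t ∈ Set.Icc a (a + Δt),
      HasDerivAt g (ψ t * Real.exp (p * t)) t := by
    intro t ht
    have h1 : HasDerivAt φ (deriv φ t) t := (hφ t ht).hasDerivAt
    have h2 : HasDerivAt (fun t => Real.exp (p * t)) (p * Real.exp (p * t)) t := by
      have := (Real.hasDerivAt_exp (p * t)).comp t ((hasDerivAt_id t).const_mul p)
      simpa [mul_comm, Function.comp_def] using this
    have := h1.mul h2
    simpa [hψ t, hg, Pi.mul_def, mul_comm, mul_assoc, mul_left_comm, add_mul] using this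
  have hmono : MonotoneOn g (Set.Icc a (a + Δt)) := by
    apply monotoneOn_of_deriv_nonneg (convex_Icc a (a + Δt))
    · exact fun t ht => (hgderiv t ht).continuousAt.continuousWithinAt
    · intro t ht
      rw [interior_Icc] at ht
      exact (hgderiv t (Set.mem_Icc_of_Ioo ht)).differentiableAt.differentiableWithinAt
    · intro t ht
      rw [interior_Icc] at ht
      rw [(hgderiv t (Set.mem_Icc_of_Ioo ht)).deriv]
      exact mul_nonneg (hψpos t (Set.mem_Icc_of_Ioo ht)) (Real.exp_pos _).le
  intro t ht
  have := hmono ha ht ht.1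
  have hga : 0 ≤ g a := mul_nonneg h0 (Real.exp_pos _).le
  have hgt : 0 ≤ g t := hga.trans this
  simp only [hg] at hgt
  exact (mul_nonneg_iff_of_pos_right (Real.exp_pos (p * t))).mp hgt
end

section
/- Let a ∈ ℝ, Δt > 0, p₀, p₁ > 0 and L ≥ 0. Let H₀ : ℝ → ℝ be twice differentiable on [a, a+Δt], define H₁(t) = H₀'(t) + p₀·H₀(t) and ζ(t) = H₁'(t) + p₁·H₁(t). Assume ζ is Lipschitz on [a, a+Δt] with constant L, i.e. |ζ(t₂) − ζ(t₁)| ≤ L·|t₂ − t₁| for all t₁, t₂ ∈ [a, a+Δt]. If H₀(a) ≥ 0, H₁(a) ≥ 0 and ζ(a) ≥ L·Δt, then H₀(t) ≥ 0 and H₁(t) ≥ 0 for all t ∈ [a, a+Δt]. -/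
/-- Gronwall-type key lemma: if f' + p·f ≥ 0 on [a,b] and f a ≥ 0, then f ≥ 0 on [a,b]. -/
lemma hocbf_key (a b p : ℝ) (hp : 0 < p) (f : ℝ → ℝ)
    (hf : ∀ t ∈ Set.Icc a b, DifferentiableAt ℝ f t)
    (h0 : 0 ≤ f a)
    (hineq : ∀ t ∈ Set.Icc a b, 0 ≤ deriv f t + p * f t) :
    ∀ t ∈ Set.Icc a b, 0 ≤ f t := by
  intro t ht
  have hab : a ≤ b := le_trans ht.1 ht.2
  set g : ℝ → ℝ := fun x => Real.exp (p * x) * f x with hg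
  have hgd : ∀ x ∈ Set.Icc a b, HasDerivAt g
      (Real.exp (p * x) * (deriv f x + p * f x)) x := by
    intro x hx
    have he : HasDerivAt (fun y => Real.exp (p * y)) (Real.exp (p * x) * p) x :=
      (Real.hasDerivAt_exp (p * x)).comp x ((hasDerivAt_id x).const_mul p) |>.congr_deriv
        (by ring)
    have hfx : HasDerivAt f (deriv f x) x := (hf x hx).hasDerivAt
    have := he.mul hfx
    exact this.congr_deriv (by ring)
  have hmono : MonotoneOn g (Set.Icc a b) := by
    apply monotoneOn_of_deriv_nonneg (convex_Icc a b)
    · exact fun x hx => ((hgd x hx).continuousAt).continuousWithinAt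
    · intro x hx
      rw [interior_Icc] at hx
      exact ((hgd x (Set.mem_Icc_of_Ioo hx)).differentiableAt).differentiableWithinAt
    · intro x hx
      rw [interior_Icc] at hx
      have hx' := Set.mem_Icc_of_Ioo hx
      rw [(hgd x hx').deriv]
      exact mul_nonneg (Real.exp_pos _).le (hineq x hx')
  have hga : 0 ≤ g a := mul_nonneg (Real.exp_pos _).le h0
  have hgt : g a ≤ g t := hmono (Set.left_mem_Icc.mpr hab) ht ht.1
  have : 0 ≤ Real.exp (p * t) * f t := le_trans hga hgt
  exact nonneg_of_mul_nonneg_right this (Real.exp_pos _)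

/-- scalar core of the sampled-data HOCBF lemma, relative degree two,
linear class-K functions α₀(s) = p₀·s and α₁(s) = p₁·s. -/
theorem sampled_data_hocbf_degree_two
    (a Δt p₀ p₁ L : ℝ) (hΔt : 0 < Δt) (hp₀ : 0 < p₀) (hp₁ : 0 < p₁) (hL : 0 ≤ L)
    (H₀ H₁ ζ : ℝ → ℝ)
    (hdiff : ∀ t ∈ Set.Icc a (a + Δt), DifferentiableAt ℝ H₀ t)
    (hdiff' : ∀ t ∈ Set.Icc a (a + Δt), DifferentiableAt ℝ (deriv H₀) t)
    (hH₁ : ∀ t, H₁ t = deriv H₀ t + p₀ * H₀ t)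
    (hζ : ∀ t, ζ t = deriv H₁ t + p₁ * H₁ t)
    (hlip : ∀ t₁ ∈ Set.Icc a (a + Δt), ∀ t₂ ∈ Set.Icc a (a + Δt),
      |ζ t₂ - ζ t₁| ≤ L * |t₂ - t₁|)
    (hH₀a : 0 ≤ H₀ a) (hH₁a : 0 ≤ H₁ a) (hcond : L * Δt ≤ ζ a) :
    ∀ t ∈ Set.Icc a (a + Δt), 0 ≤ H₀ t ∧ 0 ≤ H₁ t := by
  have ha : a ∈ Set.Icc a (a + Δt) :=
    Set.left_mem_Icc.mpr (by linarith)
  -- ζ ≥ 0 on the interval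
  have hζnn : ∀ t ∈ Set.Icc a (a + Δt), 0 ≤ ζ t := by
    intro t ht
    have h1 := hlip a ha t ht
    have h2 : ζ a - ζ t ≤ |ζ t - ζ a| := by
      rw [abs_sub_comm]; exact le_abs_self _
    have h3 : |t - a| = t - a := abs_of_nonneg (by linarith [ht.1])
    have h4 : L * (t - a) ≤ L * Δt :=
      mul_le_mul_of_nonneg_left (by linarith [ht.2]) hL
    rw [h3] at h1
    linarith
  -- H₁ differentiable on the interval
  have hH₁d : ∀ t ∈ Set.Icc a (a + Δt), DifferentiableAt ℝ H₁ t := by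
    intro t ht
    have : H₁ = fun x => deriv H₀ x + p₀ * H₀ x := funext hH₁
    rw [this]
    exact (hdiff' t ht).add ((hdiff t ht).const_mul p₀)
  -- H₁ ≥ 0
  have hH₁nn : ∀ t ∈ Set.Icc a (a + Δt), 0 ≤ H₁ t := by
    apply hocbf_key a (a + Δt) p₁ hp₁ H₁ hH₁d hH₁a
    intro t ht
    have := hζnn t ht
    rw [hζ t] at this
    exact this
  -- H₀ ≥ 0
  have hH₀nn : ∀ t ∈ Set.Icc a (a + Δt), 0 ≤ H₀ t := by
    apply hocbf_key a (a + Δt) p₀ hp₀ H₀ hdiff hH₀a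
    intro t ht
    have := hH₁nn t ht
    rw [hH₁ t] at this
    exact this
  exact fun t ht => ⟨hH₀nn t ht, hH₁nn t ht⟩
end

section
/- Let a < b be real numbers, let α : ℝ → ℝ be a locally Lipschitz, strictly increasing function with α(0) = 0, and let φ : ℝ → ℝ be differentiable on [a, b]. If φ(a) ≥ 0 and φ'(t) + α(φ(t)) ≥ 0 for all t ∈ [a, b], then φ(t) ≥ 0 for all t ∈ [a, b]. -/
/-- comparison-type forward-invariance lemma for the safe superlevel set
{φ ≥ 0} under the CBF condition φ' + α(φ) ≥ 0 with a locally Lipschitz, strictly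
increasing extended class-K function α. -/
theorem cbf_forward_invariance
    (a b : ℝ) (hab : a < b) (α : ℝ → ℝ)
    (hα_lip : LocallyLipschitz α) (hα_mono : StrictMono α) (hα0 : α 0 = 0)
    (φ : ℝ → ℝ) (hφ : ∀ t ∈ Set.Icc a b, DifferentiableAt ℝ φ t)
    (h0 : 0 ≤ φ a)
    (hineq : ∀ t ∈ Set.Icc a b, 0 ≤ deriv φ t + α (φ t)) :
    ∀ t ∈ Set.Icc a b, 0 ≤ φ t := by
  intro t0 ht0
  by_contra hneg
  push_neg at hneg
  set K := {t | t ∈ Set.Icc a t0 ∧ 0 ≤ φ t} with hK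
  have haK : a ∈ K := ⟨⟨le_refl a, ht0.1⟩, h0⟩
  have hKne : K.Nonempty := ⟨a, haK⟩
  have hKbdd : BddAbove K := ⟨t0, fun x hx => hx.1.2⟩
  set s := sSup K with hs
  have hsa : a ≤ s := le_csSup hKbdd haK
  have hst0 : s ≤ t0 := csSup_le hKne (fun x hx => hx.1.2)
  have hs_mem : s ∈ Set.Icc a b := ⟨hsa, hst0.trans ht0.2⟩
  have hφs : 0 ≤ φ s := by
    by_contra h
    push_neg at h
    have hca : ContinuousAt φ s := (hφ s hs_mem).continuousAt
    have hev : ∀ᶠ x in nhds s, φ x < 0 := hca.eventually_lt continuousAt_const h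
    rw [Metric.eventually_nhds_iff] at hev
    obtain ⟨ε, hε, hball⟩ := hev
    obtain ⟨k, hkK, hk⟩ := exists_lt_of_lt_csSup hKne (show s - ε < s by linarith)
    have hks : k ≤ s := le_csSup hKbdd hkK
    have : φ k < 0 := hball (by rw [Real.dist_eq]; rw [abs_lt]; constructor <;> linarith)
    linarith [hkK.2]
  have hslt : s < t0 := lt_of_le_of_ne hst0 (fun h => by rw [h] at hφs; linarith)
  have hmvt := exists_deriv_eq_slope φ hslt
    (fun t ht => ((hφ t ⟨hsa.trans ht.1, ht.2.trans ht0.2⟩).continuousAt).continuousWithinAt)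
    (fun t ht => ((hφ t ⟨hsa.trans ht.1.le, ht.2.le.trans ht0.2⟩)).differentiableWithinAt)
  obtain ⟨c, hc, hderiv⟩ := hmvt
  have hc_mem : c ∈ Set.Icc a b := ⟨hsa.trans hc.1.le, hc.2.le.trans ht0.2⟩
  have hφc : φ c < 0 := by
    by_contra h
    push_neg at h
    have : c ≤ s := le_csSup hKbdd ⟨⟨hsa.trans hc.1.le, hc.2.le⟩, h⟩
    linarith [hc.1]
  have hαc : α (φ c) < 0 := by
    have := hα_mono hφc
    rwa [hα0] at this
  have hslope : (φ t0 - φ s) / (t0 - s) < 0 :=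
    div_neg_of_neg_of_pos (by linarith) (by linarith)
  have := hineq c hc_mem
  rw [hderiv] at this
  linarith
end

section
/- Let a ∈ ℝ, Δt > 0, ε_δv > 0, ε_d ≥ 0, p > 0, L ≥ 0, c ≥ 0. Let u be a fixed vector in Euclidean ℝ³, let f, d : ℝ → ℝ³ be functions with ‖d(t)‖ ≤ ε_d for all t ∈ [a, a+Δt], and let e_v : ℝ → ℝ³ be differentiable on [a, a+Δt] with e_v'(t) = f(t) + u + d(t). Define ζ̃(t) = −2⟪e_v(t), f(t) + u + d(t)⟫ + p·(ε_δv² − ‖e_v(t)‖²) and assume ζ̃ is Lipschitz on [a, a+Δt] with constant L. If ‖e_v(a)‖ ≤ ε_δv, 2‖e_v(a)‖ ≤ c, and the nominal sampled constraint −2⟪e_v(a), f(a) + u⟫ + p·(ε_δv² − ‖e_v(a)‖²) ≥ L·Δt + c·ε_d holds, then ‖e_v(t)‖ ≤ ε_δv for all t ∈ [a, a+Δt]. -/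
open scoped RealInnerProductSpace

/-- sampled-data HOCBF lemma instantiated for the relative-degree-one
velocity barrier h_δv = ε_δv² − ‖e_v‖². -/
theorem sampled_data_velocity_barrier
    (a Δt εδv εd p L c : ℝ)
    (hΔt : 0 < Δt) (hεδv : 0 < εδv) (hεd : 0 ≤ εd) (hp : 0 < p) (hL : 0 ≤ L) (hc : 0 ≤ c)
    (u : EuclideanSpace ℝ (Fin 3)) (f d ev : ℝ → EuclideanSpace ℝ (Fin 3))
    (hd : ∀ t ∈ Set.Icc a (a + Δt), ‖d t‖ ≤ εd)
    (hdyn : ∀ t ∈ Set.Icc a (a + Δt), HasDerivAt ev (f t + u + d t) t)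
    (ζ : ℝ → ℝ)
    (hζ : ∀ t, ζ t = -2 * ⟪ev t, f t + u + d t⟫ + p * (εδv ^ 2 - ‖ev t‖ ^ 2))
    (hlip : ∀ t₁ ∈ Set.Icc a (a + Δt), ∀ t₂ ∈ Set.Icc a (a + Δt),
      |ζ t₂ - ζ t₁| ≤ L * |t₂ - t₁|)
    (h0 : ‖ev a‖ ≤ εδv) (hc2 : 2 * ‖ev a‖ ≤ c)
    (hcond : L * Δt + c * εd ≤ -2 * ⟪ev a, f a + u⟫ + p * (εδv ^ 2 - ‖ev a‖ ^ 2)) :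
    ∀ t ∈ Set.Icc a (a + Δt), ‖ev t‖ ≤ εδv := by
  have haIcc : a ∈ Set.Icc a (a + Δt) := ⟨le_refl a, by linarith⟩
  -- ζ a ≥ L * Δt
  have hζa : L * Δt ≤ ζ a := by
    have hinner : ⟪ev a, d a⟫ ≤ (c / 2) * εd := by
      calc ⟪ev a, d a⟫ ≤ ‖ev a‖ * ‖d a‖ := real_inner_le_norm _ _
        _ ≤ (c / 2) * εd := by
            apply mul_le_mul (by linarith) (hd a haIcc) (norm_nonneg _) (by linarith)
    have := hζ a
    rw [inner_add_right] at this
    nlinarith [this]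
  -- ζ nonneg on the interval
  have hζnn : ∀ t ∈ Set.Icc a (a + Δt), 0 ≤ ζ t := by
    intro t ht
    have hl := hlip a haIcc t ht
    have h1 : |t - a| ≤ Δt := by
      rw [abs_of_nonneg (by linarith [ht.1])]; linarith [ht.2]
    have h2 : ζ a - ζ t ≤ L * Δt := by
      have := abs_le.mp hl
      have hmul : L * |t - a| ≤ L * Δt := mul_le_mul_of_nonneg_left h1 hL
      linarith [this.1]
    linarith
  -- the barrier function
  set h : ℝ → ℝ := fun t => εδv ^ 2 - ‖ev t‖ ^ 2 with hhdef
  have hderiv : ∀ t ∈ Set.Icc a (a + Δt),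
      HasDerivAt h (ζ t - p * h t) t := by
    intro t ht
    have h1 : HasDerivAt (fun s => ⟪ev s, ev s⟫)
        (⟪ev t, f t + u + d t⟫ + ⟪f t + u + d t, ev t⟫) t :=
      (hdyn t ht).inner ℝ (hdyn t ht)
    have h2 : HasDerivAt h (-(⟪ev t, f t + u + d t⟫ + ⟪f t + u + d t, ev t⟫)) t := by
      have : h = fun s => εδv ^ 2 - ⟪ev s, ev s⟫ := by
        funext s; simp only [hhdef]; rw [real_inner_self_eq_norm_sq]
      rw [this]
      exact h1.const_sub _
    convert h2 using 1
    rw [hζ t, real_inner_comm (f t + u + d t) (ev t)]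
    simp [hhdef]; ring
  -- g = h * exp(p t) is monotone
  set g : ℝ → ℝ := fun t => h t * Real.exp (p * t) with hgdef
  have hgderiv : ∀ t ∈ Set.Icc a (a + Δt),
      HasDerivAt g (ζ t * Real.exp (p * t)) t := by
    intro t ht
    have he : HasDerivAt (fun s => Real.exp (p * s)) (Real.exp (p * t) * p) t := by
      have := (Real.hasDerivAt_exp (p * t)).comp t ((hasDerivAt_id t).const_mul p)
      simpa [mul_comm, Function.comp_def] using this
    have := (hderiv t ht).mul he
    exact this.congr_deriv (by ring)
  have hmono : MonotoneOn g (Set.Icc a (a + Δt)) := by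
    apply monotoneOn_of_deriv_nonneg (convex_Icc _ _)
    · exact fun t ht => ((hgderiv t ht).continuousAt).continuousWithinAt
    · intro t ht
      rw [interior_Icc] at ht
      exact ((hgderiv t (Set.mem_Icc_of_Ioo ht)).differentiableAt).differentiableWithinAt
    · intro t ht
      rw [interior_Icc] at ht
      rw [(hgderiv t (Set.mem_Icc_of_Ioo ht)).deriv]
      exact mul_nonneg (hζnn t (Set.mem_Icc_of_Ioo ht)) (Real.exp_pos _).le
  intro t ht
  have hga : 0 ≤ g a := by
    have hha : 0 ≤ h a := by
      have : ‖ev a‖ ^ 2 ≤ εδv ^ 2 := by nlinarith [norm_nonneg (ev a)]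
      simp only [hhdef]; linarith
    exact mul_nonneg hha (Real.exp_pos _).le
  have hgt : g a ≤ g t := hmono haIcc ht ht.1
  have hht : 0 ≤ h t := by
    have := hga.trans hgt
    simp only [hgdef] at this
    nlinarith [Real.exp_pos (p * t)]
  have : ‖ev t‖ ^ 2 ≤ εδv ^ 2 := by simp only [hhdef] at hht; linarith
  nlinarith [norm_nonneg (ev t)]
end

section
/- Let a ∈ ℝ, Δt > 0, ε_δr > 0, ε_d ≥ 0, p₀, p₁ > 0, L ≥ 0, c ≥ 0. Let u be a fixed vector in Euclidean ℝ³, let f, d : ℝ → ℝ³ be functions with ‖d(t)‖ ≤ ε_d for all t ∈ [a, a+Δt], and let e_r, e_v : ℝ → ℝ³ be differentiable on [a, a+Δt] with e_r'(t) = e_v(t) and e_v'(t) = f(t) + u + d(t). Define H₀(t) = ε_δr² − ‖e_r(t)‖², H₁(t) = −2⟪e_r(t), e_v(t)⟫ + p₀·H₀(t), and ζ̃(t) = −2‖e_v(t)‖² − 2⟪e_r(t), f(t) + u + d(t)⟫ − 2(p₀+p₁)⟪e_r(t), e_v(t)⟫ + p₀p₁·(ε_δr² − ‖e_r(t)‖²),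 and assume ζ̃ is Lipschitz on [a, a+Δt] with constant L. If H₀(a) ≥ 0, H₁(a) ≥ 0, 2‖e_r(a)‖ ≤ c, and the nominal sampled constraint ζ̃(a) + 2⟪e_r(a), d(a)⟫ ≥ L·Δt + c·ε_d holds, then ‖e_r(t)‖ ≤ ε_δr and H₁(t) ≥ 0 for all t ∈ [a, a+Δt]. -/
open scoped RealInnerProductSpace

private lemma myMonoOn {a b : ℝ} {g g' : ℝ → ℝ}
    (hder : ∀ t ∈ Set.Icc a b, HasDerivAt g (g' t) t)
    (hpos : ∀ t ∈ Set.Icc a b, 0 ≤ g' t) :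
    MonotoneOn g (Set.Icc a b) := by
  apply monotoneOn_of_deriv_nonneg (convex_Icc a b)
  · exact fun t ht => (hder t ht).continuousAt.continuousWithinAt
  · intro t ht
    rw [interior_Icc] at ht
    exact (hder t (Set.Ioo_subset_Icc_self ht)).differentiableAt.differentiableWithinAt
  · intro t ht
    rw [interior_Icc] at ht
    rw [(hder t (Set.Ioo_subset_Icc_self ht)).deriv]
    exact hpos t (Set.Ioo_subset_Icc_self ht)

/-- sampled-data HOCBF lemma instantiated for the relative-degree-two
position barrier h_δr = ε_δr² − ‖e_r‖² under double-integrator error dynamics. -/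
theorem sampled_data_position_barrier
    (a Δt εδr εd p₀ p₁ L c : ℝ)
    (hΔt : 0 < Δt) (hεδr : 0 < εδr) (hεd : 0 ≤ εd)
    (hp₀ : 0 < p₀) (hp₁ : 0 < p₁) (hL : 0 ≤ L) (hc : 0 ≤ c)
    (u : EuclideanSpace ℝ (Fin 3)) (f d er ev : ℝ → EuclideanSpace ℝ (Fin 3))
    (hd : ∀ t ∈ Set.Icc a (a + Δt), ‖d t‖ ≤ εd)
    (hdyn_r : ∀ t ∈ Set.Icc a (a + Δt), HasDerivAt er (ev t) t)
    (hdyn_v : ∀ t ∈ Set.Icc a (a + Δt), HasDerivAt ev (f t + u + d t) t)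
    (H₀ H₁ ζ : ℝ → ℝ)
    (hH₀ : ∀ t, H₀ t = εδr ^ 2 - ‖er t‖ ^ 2)
    (hH₁ : ∀ t, H₁ t = -2 * ⟪er t, ev t⟫ + p₀ * H₀ t)
    (hζ : ∀ t, ζ t = -2 * ‖ev t‖ ^ 2 - 2 * ⟪er t, f t + u + d t⟫
      - 2 * (p₀ + p₁) * ⟪er t, ev t⟫ + p₀ * p₁ * (εδr ^ 2 - ‖er t‖ ^ 2))
    (hlip : ∀ t₁ ∈ Set.Icc a (a + Δt), ∀ t₂ ∈ Set.Icc a (a + Δt),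
      |ζ t₂ - ζ t₁| ≤ L * |t₂ - t₁|)
    (hH₀a : 0 ≤ H₀ a) (hH₁a : 0 ≤ H₁ a) (hc2 : 2 * ‖er a‖ ≤ c)
    (hcond : L * Δt + c * εd ≤ ζ a + 2 * ⟪er a, d a⟫) :
    ∀ t ∈ Set.Icc a (a + Δt), ‖er t‖ ≤ εδr ∧ 0 ≤ H₁ t := by
  have hab : a ≤ a + Δt := by linarith
  have haI : a ∈ Set.Icc a (a + Δt) := ⟨le_refl a, hab⟩
  -- ζ a ≥ L Δt
  have hip : ⟪er a, d a⟫ ≤ c * εd / 2 := by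
    have h1 := real_inner_le_norm (er a) (d a)
    have h2 := hd a haI
    have h3 : ‖er a‖ * ‖d a‖ ≤ (c / 2) * εd := by
      apply mul_le_mul (by linarith) h2 (norm_nonneg _) (by linarith)
    linarith
  have hζa : L * Δt ≤ ζ a := by linarith
  have hζnn : ∀ t ∈ Set.Icc a (a + Δt), 0 ≤ ζ t := by
    intro t ht
    have h1 := (abs_le.mp (hlip a haI t ht)).1
    have h2 : |t - a| = t - a := abs_of_nonneg (by linarith [ht.1])
    rw [h2] at h1
    have h3 : L * (t - a) ≤ L * Δt := by
      apply mul_le_mul_of_nonneg_left _ hL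
      linarith [ht.2]
    linarith
  -- derivative of H₁
  have hH₁der : ∀ t ∈ Set.Icc a (a + Δt), HasDerivAt H₁ (ζ t - p₁ * H₁ t) t := by
    intro t ht
    have hr := hdyn_r t ht
    have hv := hdyn_v t ht
    have h1 : HasDerivAt (fun s => ⟪er s, ev s⟫)
        (⟪er t, f t + u + d t⟫ + ⟪ev t, ev t⟫) t := hr.inner ℝ hv
    have h2 : HasDerivAt (fun s => ⟪er s, er s⟫)
        (⟪er t, ev t⟫ + ⟪ev t, er t⟫) t := hr.inner ℝ hr
    have key : HasDerivAt (fun s => -2 * ⟪er s, ev s⟫ + p₀ * (εδr ^ 2 - ⟪er s, er s⟫))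
        ((-2) * (⟪er t, f t + u + d t⟫ + ⟪ev t, ev t⟫)
          + p₀ * (0 - (⟪er t, ev t⟫ + ⟪ev t, er t⟫))) t := by
      exact (h1.const_mul (-2)).add (((hasDerivAt_const t (εδr ^ 2)).sub h2).const_mul p₀)
    have hfun : H₁ = fun s => -2 * ⟪er s, ev s⟫ + p₀ * (εδr ^ 2 - ⟪er s, er s⟫) := by
      funext s
      rw [hH₁ s, hH₀ s, real_inner_self_eq_norm_sq]
    rw [← hfun] at key
    convert key using 1
    rw [hζ t, hH₁ t, hH₀ t, ← real_inner_self_eq_norm_sq (er t),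
      ← real_inner_self_eq_norm_sq (ev t), real_inner_comm (ev t) (er t)]
    ring
  -- H₁ ≥ 0 on the interval
  have hH₁nn : ∀ t ∈ Set.Icc a (a + Δt), 0 ≤ H₁ t := by
    intro t ht
    have hGder : ∀ s ∈ Set.Icc a (a + Δt),
        HasDerivAt (fun x => Real.exp (p₁ * x) * H₁ x) (Real.exp (p₁ * s) * ζ s) s := by
      intro s hs
      have he : HasDerivAt (fun x => Real.exp (p₁ * x)) (Real.exp (p₁ * s) * p₁) s :=
        by simpa using ((hasDerivAt_id s).const_mul p₁).exp
      have := he.mul (hH₁der s hs)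
      refine this.congr_deriv ?_
      ring
    have hGpos : ∀ s ∈ Set.Icc a (a + Δt), 0 ≤ Real.exp (p₁ * s) * ζ s := by
      intro s hs
      exact mul_nonneg (Real.exp_pos _).le (hζnn s hs)
    have hmono := myMonoOn hGder hGpos haI ht ht.1
    have h0 : 0 ≤ Real.exp (p₁ * a) * H₁ a := mul_nonneg (Real.exp_pos _).le hH₁a
    nlinarith [Real.exp_pos (p₁ * t)]
  -- derivative of H₀
  have hH₀der : ∀ t ∈ Set.Icc a (a + Δt), HasDerivAt H₀ (H₁ t - p₀ * H₀ t) t := by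
    intro t ht
    have hr := hdyn_r t ht
    have h2 : HasDerivAt (fun s => ⟪er s, er s⟫)
        (⟪er t, ev t⟫ + ⟪ev t, er t⟫) t := hr.inner ℝ hr
    have key : HasDerivAt (fun s => εδr ^ 2 - ⟪er s, er s⟫)
        (0 - (⟪er t, ev t⟫ + ⟪ev t, er t⟫)) t :=
      (hasDerivAt_const t (εδr ^ 2)).sub h2
    have hfun : H₀ = fun s => εδr ^ 2 - ⟪er s, er s⟫ := by
      funext s
      rw [hH₀ s, real_inner_self_eq_norm_sq]
    rw [← hfun] at key
    convert key using 1
    rw [hH₁ t, hH₀ t, ← real_inner_self_eq_norm_sq (er t),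
      real_inner_comm (ev t) (er t)]
    ring
  -- H₀ ≥ 0 on the interval
  have hH₀nn : ∀ t ∈ Set.Icc a (a + Δt), 0 ≤ H₀ t := by
    intro t ht
    have hGder : ∀ s ∈ Set.Icc a (a + Δt),
        HasDerivAt (fun x => Real.exp (p₀ * x) * H₀ x) (Real.exp (p₀ * s) * H₁ s) s := by
      intro s hs
      have he : HasDerivAt (fun x => Real.exp (p₀ * x)) (Real.exp (p₀ * s) * p₀) s :=
        by simpa using ((hasDerivAt_id s).const_mul p₀).exp
      have := he.mul (hH₀der s hs)
      refine this.congr_deriv ?_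
      ring
    have hGpos : ∀ s ∈ Set.Icc a (a + Δt), 0 ≤ Real.exp (p₀ * s) * H₁ s := by
      intro s hs
      exact mul_nonneg (Real.exp_pos _).le (hH₁nn s hs)
    have hmono := myMonoOn hGder hGpos haI ht ht.1
    have h0 : 0 ≤ Real.exp (p₀ * a) * H₀ a := mul_nonneg (Real.exp_pos _).le hH₀a
    nlinarith [Real.exp_pos (p₀ * t)]
  intro t ht
  refine ⟨?_, hH₁nn t ht⟩
  have h0 := hH₀nn t ht
  rw [hH₀ t] at h0
  nlinarith [norm_nonneg (er t)]
end
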